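/- The real-number identity ∑_{j≥1} (−1)^j·j·(j² − 1)/(2^j − 1) = 6·∑_{j≥1} 1/(4^j·(1 + 2^{−j})⁴) holds, where both series converge absolutely. -/

import Mathlib

/-!
Expanding `1 / (2^j - 1) = ∑_{k ≥ 1} 2^{-jk}` writes the left-hand side as the absolutely
convergent double series `∑_{j,k ≥ 1} (-1)^j j (j² - 1) 2^{-jk}`. Summing over `j` first instead,
the inner sum is `∑_j j (j² - 1) z^j = 6 z² / (1 - z)⁴` at `z = -2^{-k}` (because
`j (j² - 1) = 6 binom(j + 1, 3)`), which is `6 / (4^k (1 + 2^{-k})⁴)`.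
-/

lemma six_mul_choose_add_three_three (n : ℕ) :
    6 * (n + 3).choose 3 = (n + 1) * (n + 2) * (n + 3) := by
  have h3 := Nat.add_one_mul_choose_eq (n + 2) 2
  have h2 := Nat.add_one_mul_choose_eq (n + 1) 1
  rw [Nat.choose_one_right] at h2
  nlinarith

theorem hasSum_mul_sq_sub_one_mul_geometric {𝕜 : Type*} [NormedField 𝕜] {r : 𝕜} (hr : ‖r‖ < 1) :
    HasSum (fun j : ℕ => (j : 𝕜) * ((j : 𝕜) ^ 2 - 1) * r ^ j) (6 * r ^ 2 / (1 - r) ^ 4) := by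
  rw [← hasSum_nat_add_iff' 2]
  have h := (hasSum_choose_mul_geometric_of_norm_lt_one 3 hr).mul_left (6 * r ^ 2)
  rw [show 6 * r ^ 2 / (1 - r) ^ 4 - ∑ j ∈ Finset.range 2, (j : 𝕜) * ((j : 𝕜) ^ 2 - 1) * r ^ j
      = 6 * r ^ 2 * (1 / (1 - r) ^ (3 + 1)) by simp [Finset.sum_range_succ, div_eq_mul_inv]]
  refine h.congr_fun fun n => ?_
  have hn := congrArg (Nat.cast (R := 𝕜)) (six_mul_choose_add_three_three n)
  push_cast at hn ⊢
  linear_combination (r ^ 2 * r ^ n) * hn.symm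

lemma hasSum_mul_inv_pow_succ (c : ℝ) {y : ℝ} (hy : 1 < y) :
    HasSum (fun n : ℕ => c * y⁻¹ ^ (n + 1)) (c / (y - 1)) := by
  have hgeom := hasSum_geometric_of_lt_one (by positivity) (inv_lt_one_of_one_lt₀ hy)
  have hy0 : y ≠ 0 := by positivity
  rw [show c / (y - 1) = c * y⁻¹ * (1 - y⁻¹)⁻¹ by field_simp]
  exact (hgeom.mul_left (c * y⁻¹)).congr_fun fun n => by ring

lemma one_lt_two_pow_succ (m : ℕ) : (1 : ℝ) < 2 ^ (m + 1) :=
  one_lt_pow₀ one_lt_two m.succ_ne_zero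

/-- The entry `(j, k) = (m + 1, n + 1)` of the double series. -/
noncomputable def lambertArray (m n : ℕ) : ℝ :=
  (-1) ^ (m + 1) * ((m : ℝ) + 1) * (((m : ℝ) + 1) ^ 2 - 1) * ((2 : ℝ) ^ (m + 1))⁻¹ ^ (n + 1)

lemma hasSum_lambertArray_row (m : ℕ) :
    HasSum (fun n => lambertArray m n)
      ((-1) ^ (m + 1) * ((m : ℝ) + 1) * (((m : ℝ) + 1) ^ 2 - 1) / (2 ^ (m + 1) - 1)) :=
  hasSum_mul_inv_pow_succ _ (one_lt_two_pow_succ m)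

lemma hasSum_abs_lambertArray_row (m : ℕ) :
    HasSum (fun n => |lambertArray m n|)
      |(-1) ^ (m + 1) * ((m : ℝ) + 1) * (((m : ℝ) + 1) ^ 2 - 1) / (2 ^ (m + 1) - 1)| := by
  have hy := one_lt_two_pow_succ m
  rw [abs_div, abs_of_pos (sub_pos.mpr hy)]
  refine (hasSum_mul_inv_pow_succ _ hy).congr_fun fun n => ?_
  rw [lambertArray, abs_mul,
    abs_of_pos (by positivity : (0 : ℝ) < ((2 : ℝ) ^ (m + 1))⁻¹ ^ (n + 1))]

lemma hasSum_lambertArray_col (n : ℕ) :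
    HasSum (fun m => lambertArray m n)
      (6 * (1 / (4 ^ (n + 1) * (1 + ((2 : ℝ) ^ (n + 1))⁻¹) ^ 4))) := by
  set y : ℝ := ((2 : ℝ) ^ (n + 1))⁻¹ with hy
  have hy0 : 0 < y := by positivity
  have hy1 : ‖-y‖ < 1 := by
    rw [norm_neg, Real.norm_of_nonneg hy0.le]
    exact inv_lt_one_of_one_lt₀ (one_lt_two_pow_succ n)
  have h := (hasSum_nat_add_iff' 1).mpr (hasSum_mul_sq_sub_one_mul_geometric (𝕜 := ℝ) hy1)
  have hval : 6 * (-y) ^ 2 / (1 - -y) ^ 4 - 0 = 6 * (1 / (4 ^ (n + 1) * (1 + y) ^ 4)) := by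
    have h4 : (4 : ℝ) ^ (n + 1) = (y ^ 2)⁻¹ := by
      rw [hy, inv_pow, inv_inv, ← pow_mul, mul_comm, pow_mul]
      norm_num
    rw [h4, sub_zero, sub_neg_eq_add, neg_sq]
    field_simp
  simp only [Finset.range_one, Finset.sum_singleton, CharP.cast_eq_zero, zero_mul, hval] at h
  refine h.congr_fun fun m => ?_
  have hswap : ((2 : ℝ) ^ (m + 1))⁻¹ ^ (n + 1) = y ^ (m + 1) := by
    rw [hy, ← inv_pow, ← inv_pow, ← pow_mul, ← pow_mul, mul_comm]
  rw [lambertArray, hswap, neg_pow y]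
  push_cast
  ring

lemma summable_two_mul_succ_cube_mul_half_pow :
    Summable fun m : ℕ => 2 * ((m : ℝ) + 1) ^ 3 * (1 / 2) ^ (m + 1) := by
  have h := (summable_nat_add_iff 1).mpr
    (summable_pow_mul_geometric_of_norm_lt_one (R := ℝ) 3 (r := 1 / 2) (by norm_num))
  exact (h.mul_left 2).congr fun m => by push_cast; ring

lemma summable_abs_mul_sq_sub_one_div_two_pow_sub_one :
    Summable fun m : ℕ =>
      |(-1) ^ (m + 1) * ((m : ℝ) + 1) * (((m : ℝ) + 1) ^ 2 - 1) / (2 ^ (m + 1) - 1)| := by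
  refine summable_two_mul_succ_cube_mul_half_pow.of_nonneg_of_le (fun _ => abs_nonneg _)
    fun m => ?_
  have hy : (2 : ℝ) ≤ 2 ^ (m + 1) := le_self_pow₀ one_le_two m.succ_ne_zero
  have hm : (0 : ℝ) ≤ m := m.cast_nonneg
  calc _ = ((m : ℝ) + 1) * (((m : ℝ) + 1) ^ 2 - 1) / (2 ^ (m + 1) - 1) := by
        rw [abs_div, abs_mul, abs_mul, abs_pow, abs_neg, abs_one, one_pow, one_mul,
          abs_of_pos (by linarith : (0 : ℝ) < 2 ^ (m + 1) - 1), abs_of_nonneg (by positivity),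
          abs_of_nonneg (by nlinarith)]
    _ ≤ ((m : ℝ) + 1) ^ 3 / (2 ^ (m + 1) / 2) :=
        div_le_div₀ (by positivity) (by nlinarith) (by positivity) (by linarith)
    _ = 2 * ((m : ℝ) + 1) ^ 3 * (1 / 2) ^ (m + 1) := by
        rw [one_div_pow]
        field_simp

lemma summable_abs_one_div_four_pow_mul :
    Summable fun n : ℕ => |(1 : ℝ) / (4 ^ (n + 1) * (1 + ((2 : ℝ) ^ (n + 1))⁻¹) ^ 4)| := by
  have hgeom : Summable fun n : ℕ => (1 / 4 : ℝ) ^ (n + 1) :=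
    (summable_nat_add_iff 1).mpr (summable_geometric_of_lt_one (by norm_num) (by norm_num))
  refine hgeom.of_nonneg_of_le (fun _ => abs_nonneg _) fun n => ?_
  have hy : (0 : ℝ) ≤ ((2 : ℝ) ^ (n + 1))⁻¹ := by positivity
  rw [abs_of_pos (by positivity), one_div_pow]
  exact one_div_le_one_div_of_le (by positivity)
    (le_mul_of_one_le_right (by positivity) (one_le_pow₀ (le_add_of_nonneg_right hy)))

lemma summable_abs_lambertArray : Summable fun p : ℕ × ℕ => |lambertArray p.1 p.2| := by
  refine (summable_prod_of_nonneg fun _ => abs_nonneg _).mpr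
    ⟨fun m => (hasSum_abs_lambertArray_row m).summable, ?_⟩
  simp only [fun m => (hasSum_abs_lambertArray_row m).tsum_eq]
  exact summable_abs_mul_sq_sub_one_div_two_pow_sub_one

/-- the identity
`∑_{j≥1} (−1)^j j(j²−1)/(2^j−1) = 6 ∑_{j≥1} 1/(4^j (1+2^{−j})⁴)`
(both sums reindexed by `j = m + 1`). -/
theorem peripheral_path_length_identity' :
    Summable (fun m : ℕ =>
      |(-1 : ℝ) ^ (m + 1) * ((m : ℝ) + 1) * (((m : ℝ) + 1) ^ 2 - 1) / (2 ^ (m + 1) - 1)|) ∧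
    Summable (fun m : ℕ => |(1 : ℝ) / (4 ^ (m + 1) * (1 + ((2 : ℝ) ^ (m + 1))⁻¹) ^ 4)|) ∧
    ∑' m : ℕ, (-1 : ℝ) ^ (m + 1) * ((m : ℝ) + 1) * (((m : ℝ) + 1) ^ 2 - 1) /
        (2 ^ (m + 1) - 1) =
      6 * ∑' m : ℕ, (1 : ℝ) / (4 ^ (m + 1) * (1 + ((2 : ℝ) ^ (m + 1))⁻¹) ^ 4) := by
  refine ⟨summable_abs_mul_sq_sub_one_div_two_pow_sub_one, summable_abs_one_div_four_pow_mul, ?_⟩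
  have hsummable : Summable (Function.uncurry lambertArray) := summable_abs_lambertArray.of_abs
  calc _ = ∑' m, ∑' n, lambertArray m n :=
        tsum_congr fun m => (hasSum_lambertArray_row m).tsum_eq.symm
    _ = ∑' n, ∑' m, lambertArray m n := hsummable.tsum_comm.symm
    _ = ∑' n, 6 * (1 / (4 ^ (n + 1) * (1 + ((2 : ℝ) ^ (n + 1))⁻¹) ^ 4)) :=
        tsum_congr fun n => (hasSum_lambertArray_col n).tsum_eq
    _ = _ := tsum_mul_left
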